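/- arXiv:1405.7938 — 5 statements merged into one kernel-verified Lean document; each statement's English description precedes it below -/
import Mathlib

section
/- Let G be a countable group acting on a measurable space X such that for every g ∈ G the map x ↦ g·x is measurable, let μ be a probability measure on G, and let ν be a μ-stationary probability measure on X. Suppose E ⊆ X is a measurable subset such that for every g in the subgroup gr(μ) generated by the support of μ, either g·E = E or g·E ∩ E = ∅, and the collection of sets {g·E : g ∈ gr(μ)} is infinite. Then ν(E) = 0. -/
/-!
Maximum principle. The translates `g • E`, `g` in the subgroup `H` generated by the support of `μ`,
are pairwise disjoint, so for every `ε > 0` only finitely many of them have `ν`-measure `≥ ε`.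
If `ν E > 0`, the measure therefore attains its maximum on the translates, and the finite set `F`
of maximising translates is mapped into itself by `s⁻¹` for every `s` in the support of `μ`:
stationarity writes the maximal value as a `μ`-average of values that are all at most the
maximum. Being finite, `F` is then stabilised by all of `H`, so all infinitely many translates
have the same positive measure, which is impossible.
-/

open MeasureTheory Pointwise
open scoped ENNReal

namespace ENNReal

theorem eq_of_tsum_mul_eq_of_le {ι : Type*} {w a : ι → ℝ≥0∞} {m : ℝ≥0∞}
    (hw : ∑' i, w i = 1) (hm : m ≠ ∞) (hle : ∀ i, w i ≠ 0 → a i ≤ m)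
    (hsum : ∑' i, w i * a i = m) {i : ι} (hi : w i ≠ 0) : a i = m := by
  by_contra hne
  have hterm : ∀ j, w j * a j ≤ w j * m := fun j => by
    rcases eq_or_ne (w j) 0 with h | h
    · simp [h]
    · exact mul_le_mul_right (hle j h) _
  have hwi : w i ≠ ∞ := ne_top_of_le_ne_top one_ne_top (hw ▸ ENNReal.le_tsum i)
  have hlt : ∑' j, w j * a j < ∑' j, w j * m :=
    ENNReal.tsum_lt_tsum (hsum ▸ hm) hterm
      ((ENNReal.mul_lt_mul_iff_right hi hwi).2 ((hle i hi).lt_of_ne hne))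
  rw [hsum, ENNReal.tsum_mul_right, hw, one_mul] at hlt
  exact hlt.false

end ENNReal

theorem Set.exists_isMaxOn_of_finite_setOf_le {α β : Type*} [LinearOrder β] {S : Set α}
    {f : α → β} {a : α} (ha : a ∈ S) (hfin : {x ∈ S | f a ≤ f x}.Finite) :
    ∃ b ∈ S, IsMaxOn f S b := by
  obtain ⟨b, ⟨hbS, hab⟩, hb⟩ := Set.exists_max_image _ f hfin ⟨a, ha, le_rfl⟩
  refine ⟨b, hbS, fun x hx => ?_⟩
  rcases le_total (f a) (f x) with hax | hxa
  · exact hb x ⟨hx, hax⟩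
  · exact hxa.trans hab

theorem Set.disjoint_smul_set_of_ne {G X : Type*} [Group G] [MulAction G X] {H : Subgroup G}
    {E : Set X} (halt : ∀ g ∈ H, g • E = E ∨ g • E ∩ E = ∅) {g h : G} (hg : g ∈ H) (hh : h ∈ H)
    (hne : g • E ≠ h • E) : Disjoint (g • E) (h • E) := by
  have hh_eq : h • E = g • (g⁻¹ * h) • E := by rw [smul_smul, mul_inv_cancel_left]
  rw [hh_eq, Set.disjoint_smul_set]
  rcases halt (g⁻¹ * h) (mul_mem (inv_mem hg) hh) with hfix | hdisj
  · exact absurd (by rw [hh_eq, hfix]) hne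
  · exact (Set.disjoint_iff_inter_eq_empty.2 hdisj).symm

theorem Subgroup.closure_le_stabilizer_of_inv_smul_mem {G α : Type*} [Group G] [MulAction G α]
    {T : Set G} {F : Set α} (hF : F.Finite) (h : ∀ s ∈ T, ∀ a ∈ F, s⁻¹ • a ∈ F) :
    Subgroup.closure T ≤ MulAction.stabilizer G F :=
  (Subgroup.closure_le _).2 fun s hs =>
    (MulAction.stabilizer G F).inv_mem_iff.1 ((MulAction.mem_stabilizer_set' hF).2 (h s hs))

namespace MeasureTheory

theorem tsum_measure_singleton {α : Type*} [MeasurableSpace α] [Countable α]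
    [MeasurableSingletonClass α] (μ : Measure α) : ∑' a, μ {a} = μ Set.univ := by
  rw [← Set.iUnion_of_singleton α, measure_iUnion (fun a b h => by simp [Function.onFun, h])
    fun a => measurableSet_singleton a]

theorem finite_setOf_const_le_measure_of_pairwiseDisjoint {X : Type*} [MeasurableSpace X]
    (ν : Measure X) [IsFiniteMeasure ν] {S : Set (Set X)} (hS_meas : ∀ A ∈ S, MeasurableSet A)
    (hS_disj : S.PairwiseDisjoint id) {ε : ℝ≥0∞} (hε : 0 < ε) :
    {A ∈ S | ε ≤ ν A}.Finite := by
  have hfin : {A : S | ε ≤ ν A}.Finite :=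
    Measure.finite_const_le_meas_of_disjoint_iUnion ν hε (fun A => hS_meas A A.2)
      (fun A B hAB => hS_disj A.2 B.2 (Subtype.coe_ne_coe.2 hAB)) (measure_ne_top ν _)
  convert hfin.image Subtype.val using 1
  ext A
  simp [and_comm]

theorem measurableSet_smul_set {G X : Type*} [Group G] [MeasurableSpace X] [MulAction G X]
    (hmeas : ∀ g : G, Measurable fun x : X => g • x) (g : G) {E : Set X} (hE : MeasurableSet E) :
    MeasurableSet (g • E) :=
  Set.preimage_smul_inv g E ▸ hmeas g⁻¹ hE

section Stationary

variable {G X : Type*} [Group G] [MeasurableSpace G] [MeasurableSpace X] [MulAction G X]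

def IsStationary (μ : Measure G) (ν : Measure X) : Prop :=
  ∀ A : Set X, MeasurableSet A → ν A = ∑' g : G, μ {g} * ν ((fun x => g • x) ⁻¹' A)

theorem IsStationary.measure_inv_smul_eq_of_forall_le [Countable G] [MeasurableSingletonClass G]
    {μ : Measure G} [IsProbabilityMeasure μ] {ν : Measure X} [IsFiniteMeasure ν]
    (hν : IsStationary μ ν) {A : Set X} (hA : MeasurableSet A)
    (hmax : ∀ g, μ {g} ≠ 0 → ν (g⁻¹ • A) ≤ ν A) {s : G} (hs : μ {s} ≠ 0) :
    ν (s⁻¹ • A) = ν A := by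
  refine ENNReal.eq_of_tsum_mul_eq_of_le (by simp [tsum_measure_singleton]) (measure_ne_top ν A)
    hmax ?_ hs
  simp_rw [← Set.preimage_smul]
  exact (hν A hA).symm

theorem IsStationary.measure_smul_eq_of_isMaxOn [Countable G] [MeasurableSingletonClass G]
    {μ : Measure G} [IsProbabilityMeasure μ] {ν : Measure X} [IsFiniteMeasure ν]
    (hν : IsStationary μ ν) {S : Set (Set X)} (hS_meas : ∀ A ∈ S, MeasurableSet A)
    (hS_smul : ∀ g, 0 < μ {g} → ∀ A ∈ S, g⁻¹ • A ∈ S) {A : Set X} (hA : A ∈ S)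
    (hmax : IsMaxOn ν S A) (hfin : {B ∈ S | ν A ≤ ν B}.Finite) :
    ∀ g ∈ Subgroup.closure {g : G | 0 < μ {g}}, ν (g • A) = ν A := by
  have hstab := Subgroup.closure_le_stabilizer_of_inv_smul_mem hfin fun s hs B ⟨hBS, hAB⟩ => by
    have hB_max : ∀ g, μ {g} ≠ 0 → ν (g⁻¹ • B) ≤ ν B := fun g hg =>
      (hmax (hS_smul g (pos_iff_ne_zero.2 hg) B hBS)).trans hAB
    refine ⟨hS_smul s hs B hBS, ?_⟩
    rw [hν.measure_inv_smul_eq_of_forall_le (hS_meas B hBS) hB_max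
      (show 0 < μ {s} from hs).ne']
    exact hAB
  intro g hg
  have hgA : g • A ∈ {B ∈ S | ν A ≤ ν B} :=
    (MulAction.mem_stabilizer_set' hfin).1 (hstab hg) ⟨hA, le_rfl⟩
  exact le_antisymm (hmax hgA.1) hgA.2

end Stationary

end MeasureTheory

/-- **Maximum principle for stationary measures** (Ballmann, Kaimanovich–Masur, Woess).
Let `G` be a countable group acting measurably on a measurable space `X`, let `μ` be a
probability measure on `G` and `ν` a `μ`-stationary probability measure on `X`. If `E ⊆ X`
is measurable, every element `g` of the subgroup generated by the support of `μ` satisfies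
`g • E = E` or `g • E ∩ E = ∅`, and the orbit of `E` under that subgroup is infinite,
then `ν E = 0`. -/
theorem stationary_measure_zero_of_disjoint_translates
    {G X : Type*} [Group G] [Countable G] [MeasurableSpace G] [DiscreteMeasurableSpace G]
    [MeasurableSpace X] [MulAction G X]
    (hmeas : ∀ g : G, Measurable fun x : X => g • x)
    (μ : Measure G) [IsProbabilityMeasure μ]
    (ν : Measure X) [IsProbabilityMeasure ν]
    (hstat : ∀ A : Set X, MeasurableSet A →
      ν A = ∑' g : G, μ {g} * ν ((fun x => g • x) ⁻¹' A))
    (E : Set X) (hE : MeasurableSet E)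
    (halt : ∀ g ∈ Subgroup.closure {g : G | 0 < μ {g}},
      g • E = E ∨ g • E ∩ E = ∅)
    (hinf : Set.Infinite
      ((fun g : G => g • E) '' (Subgroup.closure {g : G | 0 < μ {g}} : Set G))) :
    ν E = 0 := by
  set H := Subgroup.closure {g : G | 0 < μ {g}}
  set S := (fun g : G => g • E) '' (H : Set G)
  have hS_meas : ∀ A ∈ S, MeasurableSet A := by
    rintro _ ⟨g, -, rfl⟩
    exact measurableSet_smul_set hmeas g hE
  have hS_disj : S.PairwiseDisjoint id := by
    rintro _ ⟨g, hg, rfl⟩ _ ⟨h, hh, rfl⟩ hne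
    exact Set.disjoint_smul_set_of_ne halt hg hh hne
  have hS_smul : ∀ g ∈ H, ∀ A ∈ S, g • A ∈ S := by
    rintro g hg _ ⟨h, hh, rfl⟩
    exact ⟨g * h, mul_mem hg hh, mul_smul g h E⟩
  have hES : E ∈ S := ⟨1, H.one_mem, one_smul G E⟩
  have hfin := fun ε (hε : 0 < ε) =>
    finite_setOf_const_le_measure_of_pairwiseDisjoint ν hS_meas hS_disj hε
  by_contra hE0
  have hE_pos := pos_iff_ne_zero.2 hE0
  obtain ⟨A, ⟨a, ha, rfl⟩, hmax⟩ :=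
    Set.exists_isMaxOn_of_finite_setOf_le hES (hfin _ hE_pos)
  have hA_pos : 0 < ν (a • E) := hE_pos.trans_le (hmax hES)
  have hconst := IsStationary.measure_smul_eq_of_isMaxOn hstat hS_meas
    (fun g hg => hS_smul _ (inv_mem (Subgroup.subset_closure hg))) (Set.mem_image_of_mem _ ha) hmax
    (hfin _ hA_pos)
  refine hinf ((hfin _ hA_pos).subset ?_)
  rintro _ ⟨g, hg, rfl⟩
  refine ⟨⟨g, hg, rfl⟩, le_of_eq ?_⟩
  rw [← hconst (g * a⁻¹) (mul_mem hg (inv_mem ha)), smul_smul, inv_mul_cancel_right]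
end

section
/- Let X be a compact metrizable topological space with its Borel σ-algebra, let ν and λ be Borel probability measures on X, and let (g_n) be a sequence of continuous maps g_n : X → X such that the pushforward measures (g_n)_*ν converge weakly to λ. Suppose there is a Borel subset E ⊆ X with ν(E) = 1 and a closed subset Ω ⊆ X such that for every x ∈ E, every cluster point of the sequence (g_n(x))_{n∈ℕ} belongs to Ω. Then λ(Ω) = 1. -/
open MeasureTheory Filter Topology Set

/-!
For `x ∈ E`, compactness turns the hypothesis on cluster points into `g n x → Ω` in the sense of
`𝓝ˢ Ω`. Given an open `U ⊇ Ω`, a Urysohn function `f` equal to `1` on `Ω` and to `0` off `U`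
then satisfies `f (g n x) → 1` for `ν`-a.e. `x`, so by dominated convergence and weak convergence
`∫ f ∂lam = 1`, whence `lam U ≥ 1`. Outer regularity of `lam` gives `lam Ω = 1`.
-/

section

variable {X Y : Type*} [TopologicalSpace X] [MeasurableSpace X] [OpensMeasurableSpace X]
  [MeasurableSpace Y]

theorem tendsto_integral_map_of_ae_tendsto_nhdsSet {ν : Measure Y} [IsProbabilityMeasure ν]
    {g : ℕ → Y → X} (hg : ∀ n, AEMeasurable (g n) ν) {s : Set X}
    (hlim : ∀ᵐ y ∂ν, Tendsto (fun n => g n y) atTop (𝓝ˢ s))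
    (f : C(X, ℝ)) (hf : ∀ x, f x ∈ Icc (0 : ℝ) 1) (hfs : EqOn f 1 s) :
    Tendsto (fun n => ∫ x, f x ∂(ν.map (g n))) atTop (𝓝 1) := by
  simp_rw [integral_map (hg _) f.continuous.aestronglyMeasurable]
  have hone : ∫ _, (1 : ℝ) ∂ν = 1 := by simp
  rw [← hone]
  refine tendsto_integral_of_dominated_convergence (fun _ => 1)
    (fun n => f.continuous.aestronglyMeasurable.comp_aemeasurable (hg n)) (integrable_const 1)
    (fun n => ae_of_all _ fun y => ?_) (hlim.mono fun y hy => ?_)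
  · rw [Real.norm_of_nonneg (hf _).1]
    exact (hf _).2
  · exact (f.continuous.tendsto_nhdsSet_nhds hfs).comp hy

theorem one_le_measure_of_ae_tendsto_nhdsSet [NormalSpace X] {ν : Measure Y}
    [IsProbabilityMeasure ν] {lam : Measure X} {g : ℕ → Y → X} (hg : ∀ n, AEMeasurable (g n) ν)
    (hconv : ∀ f : C(X, ℝ),
      Tendsto (fun n => ∫ x, f x ∂(ν.map (g n))) atTop (𝓝 (∫ x, f x ∂lam)))
    {s : Set X} (hs : IsClosed s) (hlim : ∀ᵐ y ∂ν, Tendsto (fun n => g n y) atTop (𝓝ˢ s))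
    {U : Set X} (hU : IsOpen U) (hsU : s ⊆ U) : 1 ≤ lam U := by
  obtain ⟨f, hf0, hf1, hf01⟩ := exists_continuous_zero_one_of_isClosed hU.isClosed_compl hs
    (disjoint_compl_left_iff_subset.2 hsU)
  have hint : ∫ x, f x ∂lam = 1 :=
    tendsto_nhds_unique (hconv f) (tendsto_integral_map_of_ae_tendsto_nhdsSet hg hlim f hf01 hf1)
  simpa [hint] using integral_le_measure (μ := lam) (fun x _ => (hf01 x).2)
    (fun x hx => (hf0 hx).le)

end

/-- **(Kaimanovich–Masur, Lemma 1.5.5.)** Let `X` be a compact metrizable space, `ν` and `lam`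
Borel probability measures on `X`, and `(g n)` a sequence of continuous self-maps of `X` such
that the pushforwards `(g n)_* ν` converge weakly to `lam`. If there is a Borel set `E` of
full `ν`-measure and a closed set `Ω` containing all cluster points of every sequence
`(g n x)` with `x ∈ E`, then `lam Ω = 1`. -/
theorem weak_limit_supported_on_cluster_set
    {X : Type*} [TopologicalSpace X] [CompactSpace X] [TopologicalSpace.MetrizableSpace X]
    [MeasurableSpace X] [BorelSpace X]
    (ν lam : Measure X) [IsProbabilityMeasure ν] [IsProbabilityMeasure lam]
    (g : ℕ → X → X) (hg : ∀ n, Continuous (g n))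
    (hconv : ∀ f : C(X, ℝ),
      Tendsto (fun n => ∫ x, f x ∂(ν.map (g n))) atTop (nhds (∫ x, f x ∂lam)))
    (E : Set X) (hE : MeasurableSet E) (hνE : ν E = 1)
    (Ω : Set X) (hΩ : IsClosed Ω)
    (hcluster : ∀ x ∈ E, ∀ y : X, MapClusterPt y atTop (fun n => g n x) → y ∈ Ω) :
    lam Ω = 1 := by
  have hE_ae : ∀ᵐ x ∂ν, x ∈ E := (ae_mem_iff_measure_eq hE.nullMeasurableSet).2 (by simp [hνE])
  have hlim : ∀ᵐ x ∂ν, Tendsto (fun n => g n x) atTop (𝓝ˢ Ω) :=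
    hE_ae.mono fun x hx => isCompact_univ.tendsto_nhdsSet_of_mapClusterPt
      (Eventually.of_forall fun _ => mem_univ _) fun y _ => hcluster x hx y
  refine le_antisymm prob_le_one ?_
  rw [Set.measure_eq_iInf_isOpen]
  exact le_iInf₂ fun U hΩU => le_iInf fun hU =>
    one_le_measure_of_ae_tendsto_nhdsSet (fun n => (hg n).aemeasurable) hconv hΩ hlim hU hΩU
end

section
/- Let L ≥ 1 and let s₋, s₊, t₋, t₊, ℓ₁, ℓ₂ be strictly positive real numbers satisfying max(t₋/s₋, t₊/s₊) ≤ ℓ₁ ≤ L·max(t₋/s₋, t₊/s₊) and max(s₋/t₋, s₊/t₊) ≤ ℓ₂ ≤ L·max(s₋/t₋, s₊/t₊). Set σ_S = log(s₊/s₋), σ_T = log(t₊/t₋), and D = log ℓ₁ + log ℓ₂. Then |σ_S − σ_T| ≤ D ≤ |σ_S − σ_T| + 2·log L. -/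
/-- The arithmetic content of the fact that `L`-axes are quasi-geodesics for the symmetric
Lipschitz metric: if `ℓ₁` and `ℓ₂` are pinched, up to a factor `L`, between the maximal
stretch ratios of a positive pair of currents in each direction, then the quantity
`D = log ℓ₁ + log ℓ₂` differs from `|σS − σT|` by at most `2 log L`, where
`σS = log (sp/sm)` and `σT = log (tp/tm)` are the heights (`sm, sp, tm, tp` standing for
`s₋, s₊, t₋, t₊`). -/
theorem axis_quasi_geodesic_estimate
    (L sm sp tm tp ℓ₁ ℓ₂ : ℝ) (hL : 1 ≤ L)
    (hsm : 0 < sm) (hsp : 0 < sp) (htm : 0 < tm) (htp : 0 < tp)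
    (hℓ₁ : 0 < ℓ₁) (hℓ₂ : 0 < ℓ₂)
    (h1 : max (tm / sm) (tp / sp) ≤ ℓ₁) (h1' : ℓ₁ ≤ L * max (tm / sm) (tp / sp))
    (h2 : max (sm / tm) (sp / tp) ≤ ℓ₂) (h2' : ℓ₂ ≤ L * max (sm / tm) (sp / tp)) :
    |Real.log (sp / sm) - Real.log (tp / tm)| ≤ Real.log ℓ₁ + Real.log ℓ₂ ∧
      Real.log ℓ₁ + Real.log ℓ₂ ≤
        |Real.log (sp / sm) - Real.log (tp / tm)| + 2 * Real.log L := by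
  have hL0 : 0 < L := lt_of_lt_of_le one_pos hL
  have hlogL : 0 ≤ Real.log L := Real.log_nonneg hL
  -- lower bounds on log ℓ₁, log ℓ₂
  have l1a : Real.log (tm / sm) ≤ Real.log ℓ₁ :=
    Real.log_le_log (by positivity) (le_trans (le_max_left _ _) h1)
  have l1b : Real.log (tp / sp) ≤ Real.log ℓ₁ :=
    Real.log_le_log (by positivity) (le_trans (le_max_right _ _) h1)
  have l2a : Real.log (sm / tm) ≤ Real.log ℓ₂ :=
    Real.log_le_log (by positivity) (le_trans (le_max_left _ _) h2)
  have l2b : Real.log (sp / tp) ≤ Real.log ℓ₂ :=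
    Real.log_le_log (by positivity) (le_trans (le_max_right _ _) h2)
  -- upper bounds
  have u1 : Real.log ℓ₁ ≤ Real.log L + Real.log (tm / sm) ∨
      Real.log ℓ₁ ≤ Real.log L + Real.log (tp / sp) := by
    rcases max_cases (tm / sm) (tp / sp) with ⟨heq, _⟩ | ⟨heq, _⟩ <;> rw [heq] at h1'
    · left
      calc Real.log ℓ₁ ≤ Real.log (L * (tm / sm)) := Real.log_le_log hℓ₁ h1'
        _ = Real.log L + Real.log (tm / sm) := Real.log_mul hL0.ne' (by positivity)
    · right
      calc Real.log ℓ₁ ≤ Real.log (L * (tp / sp)) := Real.log_le_log hℓ₁ h1'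
        _ = Real.log L + Real.log (tp / sp) := Real.log_mul hL0.ne' (by positivity)
  have u2 : Real.log ℓ₂ ≤ Real.log L + Real.log (sm / tm) ∨
      Real.log ℓ₂ ≤ Real.log L + Real.log (sp / tp) := by
    rcases max_cases (sm / tm) (sp / tp) with ⟨heq, _⟩ | ⟨heq, _⟩ <;> rw [heq] at h2'
    · left
      calc Real.log ℓ₂ ≤ Real.log (L * (sm / tm)) := Real.log_le_log hℓ₂ h2'
        _ = Real.log L + Real.log (sm / tm) := Real.log_mul hL0.ne' (by positivity)
    · right
      calc Real.log ℓ₂ ≤ Real.log (L * (sp / tp)) := Real.log_le_log hℓ₂ h2'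
        _ = Real.log L + Real.log (sp / tp) := Real.log_mul hL0.ne' (by positivity)
  rw [Real.log_div hsp.ne' hsm.ne', Real.log_div htp.ne' htm.ne']
  rw [Real.log_div htm.ne' hsm.ne'] at l1a u1
  rw [Real.log_div htp.ne' hsp.ne'] at l1b u1
  rw [Real.log_div hsm.ne' htm.ne'] at l2a u2
  rw [Real.log_div hsp.ne' htp.ne'] at l2b u2
  set u := Real.log sp - Real.log sm - (Real.log tp - Real.log tm) with hu
  have h1abs : u ≤ |u| := le_abs_self u
  have h2abs : -u ≤ |u| := neg_le_abs u
  have h0abs : 0 ≤ |u| := abs_nonneg u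
  constructor
  · rw [abs_le]
    constructor <;> linarith
  · rcases u1 with u1 | u1 <;> rcases u2 with u2 | u2 <;> linarith
end

section
/- Let (X, d) be a pseudometric space, let C ≥ 0 be a real number, let k, M be natural numbers, let x₀ ∈ X, and let S ⊆ X be a subset contained in the closed ball of radius k around x₀. Suppose there is a function σ : X → ℝ such that for all x, y ∈ S one has |σ(x) − σ(y)| ≤ d(x, y) ≤ |σ(x) − σ(y)| + C, and suppose that every subset of S of diameter at most 1 + C is finite with at most M elements. Then S is finite and has at most (2k+1)·M elements. -/
/-- The abstract counting argument behind the linear growth of strips: if `S` is contained in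
the closed ball of radius `k` about `x₀`, there is a height function `σ` on `S` satisfying the
two-sided quasi-geodesic inequality with additive constant `C`, and every subset of `S` of
diameter at most `1 + C` has at most `M` elements, then `S` has at most `(2k+1)·M` elements. -/
theorem card_le_of_height_function
    {X : Type*} [PseudoMetricSpace X] (C : ℝ) (hC : 0 ≤ C) (k M : ℕ)
    (x₀ : X) (S : Set X) (hS : S ⊆ Metric.closedBall x₀ (k : ℝ))
    (σ : X → ℝ)
    (hσ : ∀ x ∈ S, ∀ y ∈ S,
      |σ x - σ y| ≤ dist x y ∧ dist x y ≤ |σ x - σ y| + C)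
    (hM : ∀ T ⊆ S, Metric.diam T ≤ 1 + C → T.Finite ∧ T.ncard ≤ M) :
    S.Finite ∧ S.ncard ≤ (2 * k + 1) * M := by
  rcases S.eq_empty_or_nonempty with rfl | ⟨s₀, hs₀⟩
  · simp
  -- basic bound: |σ x - σ y| ≤ 2k for x y ∈ S
  have hbd : ∀ x ∈ S, ∀ y ∈ S, |σ x - σ y| ≤ 2 * k := by
    intro x hx y hy
    have h1 := (hσ x hx y hy).1
    have h2 : dist x y ≤ dist x x₀ + dist x₀ y := dist_triangle x x₀ y
    have hx' : dist x x₀ ≤ k := Metric.mem_closedBall.mp (hS hx)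
    have hy' : dist x₀ y ≤ k := by
      rw [dist_comm]; exact Metric.mem_closedBall.mp (hS hy)
    linarith
  set m := sInf (σ '' S) with hm
  have hbdd : BddBelow (σ '' S) := by
    refine ⟨σ s₀ - 2 * k, ?_⟩
    rintro _ ⟨x, hx, rfl⟩
    have := hbd s₀ hs₀ x hx
    have := abs_le.mp this
    linarith [this.2]
  have hlow : ∀ x ∈ S, m ≤ σ x := fun x hx => csInf_le hbdd ⟨x, hx, rfl⟩
  have hup : ∀ x ∈ S, σ x ≤ m + 2 * k := by
    intro x hx
    have : σ x - 2 * k ≤ m := by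
      apply le_csInf ⟨σ s₀, Set.mem_image_of_mem σ hs₀⟩
      rintro _ ⟨y, hy, rfl⟩
      have := abs_le.mp (hbd x hx y hy)
      linarith [this.2]
    linarith
  set T : ℕ → Set X := fun i => {x ∈ S | σ x ∈ Set.Ico (m + i) (m + i + 1)} with hT
  -- each T i has diameter ≤ 1 + C, hence is finite with ≤ M elements
  have hTi : ∀ i, (T i).Finite ∧ (T i).ncard ≤ M := by
    intro i
    apply hM _ (fun x hx => hx.1)
    apply Metric.diam_le_of_forall_dist_le (by linarith)
    rintro x ⟨hxS, hx1, hx2⟩ y ⟨hyS, hy1, hy2⟩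
    have := (hσ x hxS y hyS).2
    have habs : |σ x - σ y| ≤ 1 := by
      rw [abs_le]; constructor <;> linarith
    linarith
  -- S is covered by T 0, ..., T (2k)
  have hcover : ∀ x ∈ S, ∃ i ≤ 2 * k, x ∈ T i := by
    intro x hx
    have h1 : (0:ℝ) ≤ σ x - m := by linarith [hlow x hx]
    have h2 : σ x - m ≤ 2 * k := by linarith [hup x hx]
    have hnn : 0 ≤ ⌊σ x - m⌋ := Int.floor_nonneg.mpr h1
    have hcast : ((⌊σ x - m⌋.toNat : ℤ) : ℝ) = (⌊σ x - m⌋ : ℝ) := by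
      exact_mod_cast congrArg Int.cast (Int.toNat_of_nonneg hnn)
    push_cast at hcast
    have hfl := Int.floor_le (σ x - m)
    have hfl2 := Int.lt_floor_add_one (σ x - m)
    refine ⟨⌊σ x - m⌋.toNat, ?_, hx, ?_, ?_⟩
    · have hle : ⌊σ x - m⌋ ≤ ⌊((2 * k : ℕ) : ℝ)⌋ :=
        Int.floor_le_floor (by push_cast; linarith)
      rw [Int.floor_natCast] at hle
      omega
    · rw [hcast]; linarith
    · rw [hcast]; linarith
  have hfin : S.Finite := by
    apply Set.Finite.subset ((Set.finite_Iic (2 * k)).biUnion (fun i _ => (hTi i).1))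
    intro x hx
    obtain ⟨i, hi, hxi⟩ := hcover x hx
    exact Set.mem_biUnion hi hxi
  refine ⟨hfin, ?_⟩
  -- Finset counting
  classical
  have hcard : hfin.toFinset.card ≤ (2 * k + 1) * M := by
    have hsub : hfin.toFinset ⊆
        (Finset.range (2 * k + 1)).biUnion (fun i => (hTi i).1.toFinset) := by
      intro x hx
      rw [Set.Finite.mem_toFinset] at hx
      obtain ⟨i, hi, hxi⟩ := hcover x hx
      exact Finset.mem_biUnion.mpr ⟨i, Finset.mem_range.mpr (by omega),
        (hTi i).1.mem_toFinset.mpr hxi⟩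
    calc hfin.toFinset.card
        ≤ ((Finset.range (2 * k + 1)).biUnion (fun i => (hTi i).1.toFinset)).card :=
          Finset.card_le_card hsub
      _ ≤ ∑ i ∈ Finset.range (2 * k + 1), ((hTi i).1.toFinset).card :=
          Finset.card_biUnion_le
      _ ≤ ∑ _i ∈ Finset.range (2 * k + 1), M := by
          apply Finset.sum_le_sum
          intro i _
          have := (hTi i).2
          rwa [Set.ncard_eq_toFinset_card _ (hTi i).1] at this
      _ = (2 * k + 1) * M := by simp [Finset.sum_const, mul_comm]
  rwa [Set.ncard_eq_toFinset_card _ hfin]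
end

section
/- Let G be a countable group acting by homeomorphisms on a nonempty compact metrizable topological space X (with its Borel σ-algebra), and let μ be a probability measure on G. Then there exists a μ-stationary Borel probability measure ν on X. -/
/-!
The Markov operator `ρ ↦ μ ∗ ρ` maps probability measures on `X` to probability measures, and its
dual `f ↦ ∫ f (g • ·) dμ(g)` preserves bounded continuous functions. Hence any weak-* limit point
of the Cesàro averages `(n + 1)⁻¹ ∑_{k ≤ n} μ^{∗k} ∗ δₓ`, which exists by compactness of the space
of probability measures on `X` (Prokhorov), is fixed (Krylov–Bogolyubov): tested against `f`, an
average and its image differ by a telescoping term of size at most `2‖f‖ / (n + 1)`. For a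
countable discrete group, `μ ∗ ν = ν` is exactly the stationarity equation.
-/

open MeasureTheory Filter Topology
open scoped ENNReal BoundedContinuousFunction

namespace MeasureTheory

section FixedPoint

variable {X : Type*} [MeasurableSpace X]

noncomputable def cesaroAverage (T : Measure X → Measure X) (ρ : Measure X) (n : ℕ) : Measure X :=
  ((n : ℝ≥0∞) + 1)⁻¹ • ∑ k ∈ Finset.range (n + 1), T^[k] ρ

variable {T : Measure X → Measure X}

lemma isProbabilityMeasure_iterate
    (hT : ∀ ρ, IsProbabilityMeasure ρ → IsProbabilityMeasure (T ρ))
    (ρ : Measure X) [IsProbabilityMeasure ρ] (k : ℕ) :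
    IsProbabilityMeasure (T^[k] ρ) := by
  induction k with
  | zero => assumption
  | succ k ih => rw [Function.iterate_succ_apply']; exact hT _ ih

lemma isProbabilityMeasure_cesaroAverage
    (hT : ∀ ρ, IsProbabilityMeasure ρ → IsProbabilityMeasure (T ρ))
    (ρ : Measure X) [IsProbabilityMeasure ρ] (n : ℕ) :
    IsProbabilityMeasure (cesaroAverage T ρ n) := by
  have := isProbabilityMeasure_iterate hT ρ
  constructor
  simp only [cesaroAverage, Measure.smul_apply, Measure.coe_finsetSum, Finset.sum_apply,
    measure_univ, Finset.sum_const, Finset.card_range, nsmul_eq_mul, mul_one, smul_eq_mul,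
    Nat.cast_succ]
  exact ENNReal.inv_mul_cancel (by positivity) (by simp)

variable [TopologicalSpace X] [OpensMeasurableSpace X]

lemma integral_cesaroAverage
    (hT : ∀ ρ, IsProbabilityMeasure ρ → IsProbabilityMeasure (T ρ))
    (ρ : Measure X) [IsProbabilityMeasure ρ] (n : ℕ) (f : X →ᵇ ℝ) :
    ∫ x, f x ∂(cesaroAverage T ρ n) =
      ((n : ℝ) + 1)⁻¹ * ∑ k ∈ Finset.range (n + 1), ∫ x, f x ∂(T^[k] ρ) := by
  have := isProbabilityMeasure_iterate hT ρ
  rw [cesaroAverage, integral_smul_measure,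
    integral_finsetSum_measure fun k _ => f.integrable _, ENNReal.toReal_inv, smul_eq_mul]
  norm_cast

variable {P : (X →ᵇ ℝ) → (X →ᵇ ℝ)}

lemma tendsto_integral_dual_cesaroAverage_sub
    (hT : ∀ ρ, IsProbabilityMeasure ρ → IsProbabilityMeasure (T ρ))
    (hP : ∀ ρ, IsProbabilityMeasure ρ → ∀ f, ∫ x, f x ∂(T ρ) = ∫ x, P f x ∂ρ)
    (ρ : Measure X) [IsProbabilityMeasure ρ] (f : X →ᵇ ℝ) :
    Tendsto (fun n => ∫ x, P f x ∂(cesaroAverage T ρ n) - ∫ x, f x ∂(cesaroAverage T ρ n))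
      atTop (𝓝 0) := by
  have hprob := isProbabilityMeasure_iterate hT ρ
  have htelescope : ∀ n, ∫ x, P f x ∂(cesaroAverage T ρ n) - ∫ x, f x ∂(cesaroAverage T ρ n) =
      ((n : ℝ) + 1)⁻¹ * (∫ x, f x ∂(T^[n + 1] ρ) - ∫ x, f x ∂ρ) := fun n => by
    rw [integral_cesaroAverage hT, integral_cesaroAverage hT, ← mul_sub,
      ← Finset.sum_sub_distrib]
    simp_rw [← hP _ (hprob _), ← Function.iterate_succ_apply' T]
    rw [Finset.sum_range_sub (fun k => ∫ x, f x ∂(T^[k] ρ))]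
    rfl
  simp_rw [htelescope]
  refine squeeze_zero_norm (fun n => ?_)
    (by simpa using tendsto_one_div_add_atTop_nhds_zero_nat.const_mul (2 * ‖f‖))
  rw [norm_mul, norm_inv, Real.norm_of_nonneg (by positivity), mul_comm]
  gcongr
  linarith [norm_sub_le (∫ x, f x ∂(T^[n + 1] ρ)) (∫ x, f x ∂ρ),
    f.norm_integral_le_norm (μ := T^[n + 1] ρ), f.norm_integral_le_norm (μ := ρ)]

theorem exists_isProbabilityMeasure_isFixedPt [CompactSpace X]
    [TopologicalSpace.MetrizableSpace X] [BorelSpace X] [Nonempty X]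
    (hT : ∀ ρ, IsProbabilityMeasure ρ → IsProbabilityMeasure (T ρ))
    (hP : ∀ ρ, IsProbabilityMeasure ρ → ∀ f, ∫ x, f x ∂(T ρ) = ∫ x, P f x ∂ρ) :
    ∃ ν, IsProbabilityMeasure ν ∧ Function.IsFixedPt T ν := by
  let ρ : Measure X := Measure.dirac (Classical.arbitrary X)
  let νs (n : ℕ) : ProbabilityMeasure X :=
    ⟨cesaroAverage T ρ n, isProbabilityMeasure_cesaroAverage hT ρ n⟩
  let U : Ultrafilter ℕ := .of atTop
  let ν : ProbabilityMeasure X := (U.map νs).lim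
  have hν : Tendsto νs U (𝓝 ν) := (U.map νs).le_nhds_lim
  refine ⟨ν, inferInstance, ?_⟩
  have : IsProbabilityMeasure (T ν) := hT _ inferInstance
  refine ext_of_forall_integral_eq_of_IsFiniteMeasure fun f => ?_
  rw [hP _ inferInstance]
  refine tendsto_nhds_unique
    ((ProbabilityMeasure.tendsto_iff_forall_integral_tendsto.1 hν) (P f)) ?_
  simpa [νs] using (((ProbabilityMeasure.tendsto_iff_forall_integral_tendsto.1 hν) f).add
    ((tendsto_integral_dual_cesaroAverage_sub hT hP ρ f).mono_left (Ultrafilter.of_le _))).congr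
    fun n => add_sub_cancel _ _

end FixedPoint

namespace Measure

variable {G X : Type*} [MeasurableSpace G] [MeasurableSpace X] [SMul G X]

noncomputable def smulConv (μ : Measure G) (ρ : Measure X) : Measure X :=
  (μ.prod ρ).map (Function.uncurry (· • ·))

variable [MeasurableSMul₂ G X] (μ : Measure G) (ρ : Measure X)

instance isProbabilityMeasure_smulConv [IsProbabilityMeasure μ] [IsProbabilityMeasure ρ] :
    IsProbabilityMeasure (μ.smulConv ρ) :=
  isProbabilityMeasure_map measurable_smul.aemeasurable

lemma smulConv_apply_of_countable [Countable G] [MeasurableSingletonClass G] [SFinite ρ]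
    {A : Set X} (hA : MeasurableSet A) :
    μ.smulConv ρ A = ∑' g, μ {g} * ρ ((g • ·) ⁻¹' A) := by
  rw [smulConv, map_apply measurable_smul hA, prod_apply (measurable_smul hA),
    lintegral_countable']
  exact tsum_congr fun g => mul_comm _ _

lemma integral_smulConv [TopologicalSpace X] [OpensMeasurableSpace X] [IsFiniteMeasure μ]
    [IsFiniteMeasure ρ] (f : X →ᵇ ℝ) :
    ∫ x, f x ∂(μ.smulConv ρ) = ∫ x, ∫ g, f (g • x) ∂μ ∂ρ := by
  rw [smulConv, integral_map measurable_smul.aemeasurable f.continuous.aestronglyMeasurable]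
  exact integral_prod_symm _ ((f.integrable _).comp_measurable measurable_smul)

end Measure

end MeasureTheory

namespace BoundedContinuousFunction

variable {G X : Type*} [MeasurableSpace G] [MeasurableSpace X] [TopologicalSpace X]
  [FirstCountableTopology X] [OpensMeasurableSpace X] [SMul G X] [MeasurableSMul G X]
  [ContinuousConstSMul G X]

noncomputable def integralSMul (μ : Measure G) [IsFiniteMeasure μ] (f : X →ᵇ ℝ) : X →ᵇ ℝ :=
  ofNormedAddCommGroup (fun x => ∫ g, f (g • x) ∂μ)
    (continuous_of_dominated
      (fun x => (f.continuous.measurable.comp (measurable_smul_const x)).aestronglyMeasurable)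
      (fun x => .of_forall fun g => f.norm_coe_le_norm (g • x)) (integrable_const ‖f‖)
      (.of_forall fun g => f.continuous.comp (continuous_const_smul g)))
    (‖f‖ * μ.real Set.univ)
    (fun x => norm_integral_le_of_norm_le_const (.of_forall fun g => f.norm_coe_le_norm (g • x)))

end BoundedContinuousFunction

theorem MeasureTheory.Measure.exists_smulConv_eq_self {G X : Type*} [MeasurableSpace G]
    [MeasurableSpace X] [TopologicalSpace X] [CompactSpace X] [TopologicalSpace.MetrizableSpace X]
    [BorelSpace X] [Nonempty X] [SMul G X] [MeasurableSMul₂ G X] [ContinuousConstSMul G X]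
    (μ : Measure G) [IsProbabilityMeasure μ] :
    ∃ ν : Measure X, IsProbabilityMeasure ν ∧ μ.smulConv ν = ν :=
  exists_isProbabilityMeasure_isFixedPt (P := BoundedContinuousFunction.integralSMul μ)
    (fun _ _ => inferInstance) (fun ρ _ f => μ.integral_smulConv ρ f)

/-- Existence of a stationary measure: if a countable group `G` equipped with a probability
measure `μ` acts by homeomorphisms on a nonempty compact metrizable space `X`, then there
exists a `μ`-stationary Borel probability measure on `X`. -/
theorem exists_stationary_measure
    {G X : Type*} [Group G] [Countable G] [MeasurableSpace G] [DiscreteMeasurableSpace G]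
    [TopologicalSpace X] [CompactSpace X] [TopologicalSpace.MetrizableSpace X] [Nonempty X]
    [MeasurableSpace X] [BorelSpace X] [MulAction G X]
    (hcont : ∀ g : G, Continuous fun x : X => g • x)
    (μ : Measure G) [IsProbabilityMeasure μ] :
    ∃ ν : Measure X, IsProbabilityMeasure ν ∧
      ∀ A : Set X, MeasurableSet A →
        ν A = ∑' g : G, μ {g} * ν ((fun x => g • x) ⁻¹' A) := by
  have : ContinuousConstSMul G X := ⟨hcont⟩
  have : MeasurableSMul₂ G X :=
    ⟨measurable_from_prod_countable_right fun g => (hcont g).measurable⟩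
  obtain ⟨ν, hν, hstat⟩ := μ.exists_smulConv_eq_self (X := X)
  refine ⟨ν, hν, fun A hA => ?_⟩
  nth_rw 1 [← hstat]
  exact μ.smulConv_apply_of_countable ν hA
end
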